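/- The Ehrhart polynomial of the edge polytope of an odd cycle C_{2n−1} is i(m) = C(m + 2n − 2, 2n − 2). -/

import Mathlib

/-! The edge polytope of the cycle on `Fin L` is the image of the standard simplex under the
incidence map `w ↦ (k ↦ w k + w (k - 1))`, so `m • P` is the image of `{w ≥ 0, ∑ w = m}`.
For odd `L` the incidence map is invertible: its image `x` determines `w` by
`2 w k = ∑ j, (-1) ^ j x (k - j)`. If `x` is a lattice point, reducing this mod 2 gives
`2 w k ≡ ∑ x = 2 m`, so `w` is integral. Hence the lattice points of `m • P` correspond to the
compositions of `m` into `L` parts, of which there are `multichoose L m = C(m + L - 1, L - 1)`. -/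

open Pointwise
open scoped Classical

/-- The set of vertices of the edge polytope: for each edge {i,j}, the 0/1 indicator
vector of {i,j}. The edge polytope is their convex hull. -/
noncomputable def edgePolytope {V : Type*} [Fintype V] (G : SimpleGraph V) : Set (V → ℝ) :=
  convexHull ℝ {x | ∃ i j, G.Adj i j ∧ x = fun k => if k = i ∨ k = j then (1 : ℝ) else 0}

/-- Number of lattice points in the `m`-th dilate of the edge polytope. -/
noncomputable def ehrhartCount {V : Type*} [Fintype V] (G : SimpleGraph V) (m : ℕ) : ℕ :=
  Nat.card {x : V → ℤ // (fun v => (x v : ℝ)) ∈ (m : ℝ) • edgePolytope G}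

/-- The Ehrhart series of the edge polytope of `G`. -/
noncomputable def ehrhartSeries {V : Type*} [Fintype V] (G : SimpleGraph V) : PowerSeries ℚ :=
  PowerSeries.mk fun m => (ehrhartCount G m : ℚ)

open Finset

section CycleIncidence

variable (R : Type*) [Semiring R] (L : ℕ) [NeZero L]

/-- The incidence map of the cycle on `Fin L`, edge `i` being `{i, i + 1}`. -/
def cycleIncidence : (Fin L → R) →ₗ[R] Fin L → R :=
  LinearMap.id + LinearMap.funLeft R R (· - 1)

variable {R L}

@[simp]
lemma cycleIncidence_apply (w : Fin L → R) (k : Fin L) :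
    cycleIncidence R L w k = w k + w (k - 1) :=
  rfl

lemma sum_cycleIncidence (w : Fin L → R) :
    ∑ k, cycleIncidence R L w k = 2 * ∑ k, w k := by
  calc ∑ k, cycleIncidence R L w k = ∑ k, w k + ∑ k, w (k - 1) := sum_add_distrib
    _ = 2 * ∑ k, w k := by
      rw [Fintype.sum_equiv (Equiv.subRight 1) (fun k => w (k - 1)) w fun _ => rfl, two_mul]

end CycleIncidence

section CommRing

variable {R : Type*} [CommRing R] {L : ℕ} [NeZero L]

open Fin.NatCast in
lemma sum_range_neg_one_pow_mul_cycleIncidence (w : Fin L → R) (k : Fin L) (n : ℕ) :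
    ∑ j ∈ range n, (-1) ^ j * cycleIncidence R L w (k - j) = w k - (-1) ^ n * w (k - n) := by
  induction n with
  | zero => simp
  | succ n ih =>
    rw [sum_range_succ, ih, cycleIncidence_apply, Nat.cast_succ, sub_add_eq_sub_sub, pow_succ]
    ring

open Fin.NatCast in
lemma two_mul_eq_sum_neg_one_pow_mul_cycleIncidence (hL : Odd L) (w : Fin L → R) (k : Fin L) :
    2 * w k = ∑ j : Fin L, (-1) ^ (j : ℕ) * cycleIncidence R L w (k - j) := by
  have h := sum_range_neg_one_pow_mul_cycleIncidence w k L
  rw [Fin.natCast_self, sub_zero, hL.neg_one_pow, ← Fin.sum_univ_eq_sum_range] at h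
  simp only [Fin.cast_val_eq_self] at h
  rw [h]
  ring

lemma cycleIncidence_injective [NoZeroDivisors R] [CharZero R] (hL : Odd L) :
    Function.Injective (cycleIncidence R L) := by
  intro w w' h
  funext k
  apply mul_left_cancel₀ (two_ne_zero : (2 : R) ≠ 0)
  rw [two_mul_eq_sum_neg_one_pow_mul_cycleIncidence hL, h,
    ← two_mul_eq_sum_neg_one_pow_mul_cycleIncidence hL]

end CommRing

lemma exists_intCast_eq_of_cycleIncidence_eq_intCast {K : Type*} [Field K] [CharZero K] {L : ℕ}
    [NeZero L] (hL : Odd L) {w : Fin L → K} {x : Fin L → ℤ} {m : ℤ}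
    (hx : cycleIncidence K L w = fun k => (x k : K)) (hw : ∑ k, w k = m) :
    ∃ z : Fin L → ℤ, w = fun k => (z k : K) := by
  have hsum : ∑ k, x k = 2 * m := by
    have h := sum_cycleIncidence w
    rw [hx, hw] at h
    beta_reduce at h
    exact_mod_cast h
  have hint : ∀ k, ∃ z : ℤ, w k = z := by
    intro k
    set A := ∑ j : Fin L, (-1) ^ (j : ℕ) * x (k - j)
    have hA : 2 * w k = A := by
      rw [two_mul_eq_sum_neg_one_pow_mul_cycleIncidence hL, hx]
      push_cast [A]
      rfl
    -- mod 2 the signs disappear, so `A ≡ ∑ x = 2 m`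
    have hA_even : (A : ZMod 2) = 0 := by
      calc (A : ZMod 2) = ∑ j, (x (k - j) : ZMod 2) := by simp [A, CharTwo.neg_eq]
        _ = ∑ j, (x j : ZMod 2) := Fintype.sum_equiv (Equiv.subLeft k) _ _ fun _ => rfl
        _ = ((2 * m : ℤ) : ZMod 2) := by rw [← hsum]; push_cast; rfl
        _ = 0 := by simp [show (2 : ZMod 2) = 0 from rfl]
    obtain ⟨z, hz⟩ := (ZMod.intCast_zmod_eq_zero_iff_dvd A 2).mp hA_even
    refine ⟨z, mul_left_cancel₀ (two_ne_zero : (2 : K) ≠ 0) ?_⟩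
    rw [hA, hz]
    push_cast
    rfl
  choose z hz using hint
  exact ⟨z, funext hz⟩

lemma mem_smul_stdSimplex_iff {𝕜 ι : Type*} [Field 𝕜] [LinearOrder 𝕜] [IsStrictOrderedRing 𝕜]
    [Fintype ι] [Nonempty ι] {c : 𝕜} (hc : 0 ≤ c) {w : ι → 𝕜} :
    w ∈ c • stdSimplex 𝕜 ι ↔ (∀ i, 0 ≤ w i) ∧ ∑ i, w i = c := by
  rcases hc.eq_or_lt with rfl | hc
  · rw [Set.zero_smul_set ⟨_, single_mem_stdSimplex 𝕜 (Classical.arbitrary ι)⟩, Set.mem_zero]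
    constructor
    · rintro rfl
      simp
    · rintro ⟨hw, hsum⟩
      funext i
      exact (sum_eq_zero_iff_of_nonneg fun i _ => hw i).mp hsum i (mem_univ i)
  · rw [Set.mem_smul_set_iff_inv_smul_mem₀ hc.ne']
    simp [stdSimplex, ← mul_sum, mul_nonneg_iff_of_pos_left, hc, inv_mul_eq_one₀ hc.ne', eq_comm]

lemma cycleIncidence_single {R : Type*} [Semiring R] {L : ℕ} (i : Fin (L + 2)) :
    cycleIncidence R (L + 2) (Pi.single i 1) = fun k => if k = i ∨ k = i + 1 then 1 else 0 := by
  ext k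
  by_cases hk : k = i <;> by_cases hk' : k = i + 1 <;>
    simp_all [sub_eq_iff_eq_add]

lemma edgePolytope_cycleGraph (L : ℕ) :
    edgePolytope (SimpleGraph.cycleGraph (L + 2)) =
      cycleIncidence ℝ (L + 2) '' stdSimplex ℝ (Fin (L + 2)) := by
  rw [← convexHull_rangle_single_eq_stdSimplex, LinearMap.image_convexHull, ← Set.range_comp,
    edgePolytope]
  congr 1
  ext x
  simp only [SimpleGraph.cycleGraph_adj, sub_eq_iff_eq_add', Set.mem_ofPred_eq, Set.mem_range,
    Function.comp_apply, cycleIncidence_single]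
  constructor
  · rintro ⟨i, j, rfl | rfl, rfl⟩
    · exact ⟨j, funext fun k => by simp only [or_comm]⟩
    -- `congr!` identifies the classical `Decidable` instance of `edgePolytope` with `Fin`'s
    · exact ⟨i, by congr!⟩
  · rintro ⟨i, rfl⟩
    exact ⟨i, i + 1, Or.inr rfl, by congr!⟩

lemma mem_smul_edgePolytope_cycleGraph {L : ℕ} {c : ℝ} (hc : 0 ≤ c) {x : Fin (L + 2) → ℝ} :
    x ∈ c • edgePolytope (SimpleGraph.cycleGraph (L + 2)) ↔
      ∃ w, ((∀ i, 0 ≤ w i) ∧ ∑ i, w i = c) ∧ cycleIncidence ℝ (L + 2) w = x := by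
  rw [edgePolytope_cycleGraph, ← image_smul_set]
  simp only [Set.mem_image, mem_smul_stdSimplex_iff hc]

lemma intCast_mem_smul_edgePolytope_cycleGraph_iff {L : ℕ} (hL : Odd L) (m : ℕ)
    (x : Fin (L + 2) → ℤ) :
    (fun v => (x v : ℝ)) ∈ (m : ℝ) • edgePolytope (SimpleGraph.cycleGraph (L + 2)) ↔
      ∃ y : Fin (L + 2) → ℕ, ∑ i, y i = m ∧ cycleIncidence ℤ (L + 2) (fun i => y i) = x := by
  rw [mem_smul_edgePolytope_cycleGraph (Nat.cast_nonneg m)]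
  constructor
  · rintro ⟨w, ⟨hw, hsum⟩, hwx⟩
    obtain ⟨z, rfl⟩ := exists_intCast_eq_of_cycleIncidence_eq_intCast (hL.add_even even_two) hwx
      (hsum.trans (Int.cast_natCast m).symm)
    lift z to Fin (L + 2) → ℕ using fun k => Int.cast_nonneg_iff.mp (hw k)
    beta_reduce at hsum hwx
    refine ⟨z, by exact_mod_cast hsum, funext fun k => ?_⟩
    have hk := congrFun hwx k
    simp only [cycleIncidence_apply] at hk ⊢
    exact_mod_cast hk
  · rintro ⟨y, hy, rfl⟩
    refine ⟨fun i => y i, ⟨fun i => Nat.cast_nonneg _, by rw [← hy, Nat.cast_sum]⟩, ?_⟩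
    ext k
    simp

theorem ehrhartCount_cycleGraph {L : ℕ} (hL : Odd L) (m : ℕ) :
    ehrhartCount (SimpleGraph.cycleGraph (L + 2)) m = (L + 2).multichoose m := by
  have hinj : Function.Injective fun y : Fin (L + 2) → ℕ => cycleIncidence ℤ (L + 2) fun i => y i :=
    (cycleIncidence_injective (hL.add_even even_two)).comp Nat.cast_injective.comp_left
  calc ehrhartCount (SimpleGraph.cycleGraph (L + 2)) m
      = Nat.card ((fun y : Fin (L + 2) → ℕ => cycleIncidence ℤ (L + 2) fun i => y i) ''
          {y | ∑ i, y i = m}) :=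
        Nat.card_congr (Equiv.subtypeEquivRight (intCast_mem_smul_edgePolytope_cycleGraph_iff hL m))
    _ = Nat.card (Sym (Fin (L + 2)) m) :=
        (Nat.card_image_of_injective hinj _).trans
          (Nat.card_congr (Sym.equivNatSumOfFintype _ m).symm)
    _ = (L + 2).multichoose m := by
        rw [Nat.card_eq_fintype_card, Sym.card_sym_eq_multichoose, Fintype.card_fin]

/-- The Ehrhart polynomial of the edge polytope of an odd cycle `C_{2n-1}` is
`i(m) = C(m + 2n - 2, 2n - 2)`. -/
theorem ehrhartPolynomial_odd_cycle (n : ℕ) (hn : 2 ≤ n) (m : ℕ) :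
    ehrhartCount (SimpleGraph.cycleGraph (2 * n - 1)) m = (m + (2 * n - 2)).choose (2 * n - 2) := by
  obtain ⟨L, hL, hcycle⟩ : ∃ L, Odd L ∧ 2 * n - 1 = L + 2 :=
    ⟨2 * n - 3, ⟨n - 2, by omega⟩, by omega⟩
  rw [hcycle, ehrhartCount_cycleGraph hL, Nat.multichoose_eq, ← Nat.choose_symm_add]
  congr 1
  omega
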